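/- Let p ≥ 0 be real and let (A_N), (B_N) be real sequences with A_N/N² → A₂ ∈ ℝ and B_N/N → B₁ > 0. If −A₂/B₁² < min(p, 1), then lim_{N→∞} J_p(A_N, B_N) / ((A_N + p B_N²) e^{f_N(p)}) = 1, where f_N(k) = k A_N + k² B_N²/2. -/

import Mathlib

open MeasureTheory Real Filter

/-- The standard Gaussian density `φ(v) = e^{-v²/2}/√(2π)` on `ℝ`. -/
noncomputable def gaussPDF (v : ℝ) : ℝ := Real.exp (-v ^ 2 / 2) / Real.sqrt (2 * Real.pi)

/-- `J_p(A,B) = ∫_ℝ φ(v) (1 + e^{A+Bv})^p log(1 + e^{A+Bv}) dv`. -/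
noncomputable def Jint (p A B : ℝ) : ℝ :=
  ∫ v : ℝ, gaussPDF v * (1 + Real.exp (A + B * v)) ^ p * Real.log (1 + Real.exp (A + B * v))

/-- `f_N(k) = k A_N + k² B_N²/2`. -/
noncomputable def fExp (A B k : ℝ) : ℝ := k * A + k ^ 2 * B ^ 2 / 2

/-!
Write `g(x) = (1 + eˣ)ᵖ log(1 + eˣ)`, so that `J_p(A, B) = E g(A + B V)` for a standard
Gaussian `V`. Since `log(1 + eˣ) = x + log(1 + e⁻ˣ)`, one has `x e^{px} ≤ g(x)`, and for all
`q₁ > p - 1` and `q₂ < p` with `q₂ ≤ 1` there is `K` with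
`g(x) ≤ x e^{px} + K (e^{q₁x} + e^{q₂x})`. Exponential tilting, `φ(v) e^{cv} = e^{c²/2} φ(v - c)`,
integrates both bounds exactly: the main term gives `(A + pB²) e^{f(p)}` and the error
`K (e^{f(q₁)} + e^{f(q₂)})`. Finally `f_N(q) - f_N(p) = (q - p)(A_N + (p + q) B_N² / 2)` is
asymptotic to `N²` times a negative constant as soon as `-A₂/B₁² ≤ q < p`, so taking
`q₂ = -A₂/B₁²` and `q₁ = max (p - 1/2) q₂` makes the error negligible.
-/

open ProbabilityTheory

lemma gaussPDF_nonneg (v : ℝ) : 0 ≤ gaussPDF v := by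
  unfold gaussPDF; positivity

@[fun_prop]
lemma continuous_gaussPDF : Continuous gaussPDF := by
  unfold gaussPDF; fun_prop

lemma gaussPDF_eq_gaussianPDFReal : gaussPDF = gaussianPDFReal 0 1 := by
  ext v
  simp [gaussPDF, gaussianPDFReal, div_eq_inv_mul]

lemma integrable_gaussPDF : Integrable gaussPDF :=
  gaussPDF_eq_gaussianPDFReal ▸ integrable_gaussianPDFReal 0 1

lemma integral_gaussPDF : ∫ v, gaussPDF v = 1 :=
  gaussPDF_eq_gaussianPDFReal ▸ integral_gaussianPDFReal_eq_one 0 one_ne_zero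

lemma integral_gaussPDF_mul_self : ∫ v, gaussPDF v * v = 0 := by
  simpa [gaussPDF_eq_gaussianPDFReal] using
    (integral_gaussianReal_eq_integral_smul (μ := 0) (f := id) one_ne_zero).symm

lemma integrable_gaussPDF_mul_self : Integrable fun v => gaussPDF v * v := by
  refine ((integrable_mul_exp_neg_mul_sq (b := 1 / 2) (by norm_num)).div_const
    (√(2 * π))).congr (ae_of_all _ fun v => ?_)
  simp only [gaussPDF]
  ring_nf

lemma gaussPDF_mul_exp_affine (q a b v : ℝ) :
    gaussPDF v * exp (q * (a + b * v)) = exp (fExp a b q) * gaussPDF (v - q * b) := by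
  rw [gaussPDF, gaussPDF, div_mul_eq_mul_div, ← exp_add, mul_div_assoc', ← exp_add, fExp]
  ring_nf

lemma integral_gaussPDF_mul_exp_affine_mul (q a b : ℝ) (h : ℝ → ℝ) :
    ∫ v, gaussPDF v * exp (q * (a + b * v)) * h (a + b * v)
      = exp (fExp a b q) * ∫ u, gaussPDF u * h (a + q * b ^ 2 + b * u) := by
  simp_rw [gaussPDF_mul_exp_affine, mul_assoc, integral_const_mul]
  rw [← integral_sub_right_eq_self (fun u => gaussPDF u * h (a + q * b ^ 2 + b * u)) (q * b)]
  congr 2 with v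
  ring_nf

lemma Integrable.gaussPDF_mul_exp_affine_mul {q a b : ℝ} {h : ℝ → ℝ}
    (hh : Integrable fun u => gaussPDF u * h (a + q * b ^ 2 + b * u)) :
    Integrable fun v => gaussPDF v * exp (q * (a + b * v)) * h (a + b * v) := by
  simp_rw [gaussPDF_mul_exp_affine, mul_assoc]
  refine ((hh.comp_sub_right (q * b)).const_mul (exp (fExp a b q))).congr
    (ae_of_all _ fun v => ?_)
  simp only
  ring_nf

lemma integral_gaussPDF_mul_exp_affine (q a b : ℝ) :
    ∫ v, gaussPDF v * exp (q * (a + b * v)) = exp (fExp a b q) := by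
  simpa [integral_gaussPDF] using integral_gaussPDF_mul_exp_affine_mul q a b (fun _ => 1)

lemma integrable_gaussPDF_mul_exp_affine (q a b : ℝ) :
    Integrable fun v => gaussPDF v * exp (q * (a + b * v)) := by
  simpa using Integrable.gaussPDF_mul_exp_affine_mul (q := q) (a := a) (b := b)
    (h := fun _ => 1) (by simpa using integrable_gaussPDF)

lemma integral_gaussPDF_mul_exp_affine_mul_affine (q a b : ℝ) :
    ∫ v, gaussPDF v * exp (q * (a + b * v)) * (a + b * v)
      = (a + q * b ^ 2) * exp (fExp a b q) := by
  have hsplit : (fun u => gaussPDF u * (a + q * b ^ 2 + b * u))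
      = fun u => (a + q * b ^ 2) * gaussPDF u + b * (gaussPDF u * u) := by
    ext u; ring
  refine (integral_gaussPDF_mul_exp_affine_mul q a b id).trans ?_
  rw [mul_comm]
  simp only [id]
  rw [hsplit,
    integral_add (integrable_gaussPDF.const_mul _) (integrable_gaussPDF_mul_self.const_mul _),
    integral_const_mul, integral_const_mul, integral_gaussPDF, integral_gaussPDF_mul_self]
  ring

lemma integrable_gaussPDF_mul_exp_affine_mul_affine (q a b : ℝ) :
    Integrable fun v => gaussPDF v * exp (q * (a + b * v)) * (a + b * v) := by
  refine Integrable.gaussPDF_mul_exp_affine_mul (h := id) ?_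
  refine ((integrable_gaussPDF.const_mul (a + q * b ^ 2)).add
    (integrable_gaussPDF_mul_self.const_mul b)).congr (ae_of_all _ fun u => ?_)
  simp only [id, Pi.add_apply]
  ring

noncomputable def Jkernel (p x : ℝ) : ℝ := (1 + exp x) ^ p * log (1 + exp x)

lemma Jkernel_nonneg (p x : ℝ) : 0 ≤ Jkernel p x :=
  mul_nonneg (by positivity) (log_nonneg (by linarith [exp_pos x]))

lemma exp_mul_le_Jkernel {p : ℝ} (hp : 0 ≤ p) (x : ℝ) : exp (p * x) * x ≤ Jkernel p x := by
  rcases le_or_gt 0 x with hx | hx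
  · have hlog : x ≤ log (1 + exp x) := by
      rw [le_log_iff_exp_le (by positivity)]; linarith [exp_pos x]
    have hpow : exp (p * x) ≤ (1 + exp x) ^ p := by
      rw [mul_comm, exp_mul]
      exact rpow_le_rpow (exp_pos x).le (by linarith [exp_pos x]) hp
    exact mul_le_mul hpow hlog hx (by positivity)
  · exact (mul_neg_of_pos_of_neg (exp_pos _) hx).le.trans (Jkernel_nonneg p x)

lemma Jkernel_le_of_nonpos {p x : ℝ} (hp : 0 ≤ p) (hx : x ≤ 0) :
    Jkernel p x ≤ 2 ^ p * exp x := by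
  have hpow : (1 + exp x) ^ p ≤ 2 ^ p :=
    rpow_le_rpow (by positivity) (by linarith [exp_le_one_iff.2 hx]) hp
  have hlog : log (1 + exp x) ≤ exp x := by
    linarith [log_le_sub_one_of_pos (by positivity : 0 < 1 + exp x)]
  exact mul_le_mul hpow hlog (log_nonneg (by linarith [exp_pos x])) (by positivity)

lemma one_add_rpow_le {p u : ℝ} (hp : 0 ≤ p) (hu₀ : 0 ≤ u) (hu₁ : u ≤ 1) :
    (1 + u) ^ p ≤ 1 + p * exp p * u := by
  have h₁ : (1 + u) ^ p ≤ exp (p * u) := by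
    rw [mul_comm, exp_mul]
    exact rpow_le_rpow (by linarith) (by linarith [add_one_le_exp u]) hp
  have h₂ : exp (p * u) ≤ 1 + p * u * exp (p * u) := by
    have := mul_le_mul_of_nonneg_left (add_one_le_exp (-(p * u))) (exp_pos (p * u)).le
    rw [← exp_add, add_neg_cancel, exp_zero] at this
    linarith
  have h₃ : exp (p * u) ≤ exp p := exp_le_exp.2 (by nlinarith)
  nlinarith [mul_nonneg hp hu₀]

lemma Jkernel_le_of_nonneg {p x : ℝ} (hp : 0 ≤ p) (hx : 0 ≤ x) :
    Jkernel p x ≤ exp (p * x) * x + (1 + p * exp p) * (1 + x) * exp ((p - 1) * x) := by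
  set u := exp (-x)
  have hu₀ : 0 < u := exp_pos _
  have hu₁ : u ≤ 1 := exp_le_one_iff.2 (by linarith)
  have hsplit : 1 + exp x = exp x * (1 + u) := by
    rw [mul_add, mul_one, ← exp_add, add_neg_cancel, exp_zero, add_comm]
  have hpow : (1 + exp x) ^ p = exp (p * x) * (1 + u) ^ p := by
    rw [hsplit, mul_rpow (exp_pos x).le (by positivity), ← exp_mul, mul_comm x]
  have hlog : log (1 + exp x) = x + log (1 + u) := by
    rw [hsplit, log_mul (exp_ne_zero x) (by positivity), log_exp]
  have hlogu : log (1 + u) ≤ u := by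
    linarith [log_le_sub_one_of_pos (by positivity : 0 < 1 + u)]
  have hshift : exp ((p - 1) * x) = exp (p * x) * u := by
    rw [← exp_add]; ring_nf
  have hC : 0 ≤ p * exp p := by positivity
  have key : (1 + u) ^ p * (x + log (1 + u)) ≤ x + (1 + p * exp p) * (1 + x) * u :=
    calc (1 + u) ^ p * (x + log (1 + u)) ≤ (1 + p * exp p * u) * (x + u) :=
          mul_le_mul (one_add_rpow_le hp hu₀.le hu₁) (by linarith)
            (by linarith [log_nonneg (by linarith : (1 : ℝ) ≤ 1 + u)]) (by positivity)
      _ ≤ x + (1 + p * exp p) * (1 + x) * u := by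
          nlinarith [mul_nonneg hu₀.le hx, mul_nonneg hC (mul_nonneg hu₀.le (sub_nonneg.2 hu₁))]
  rw [Jkernel, hpow, hlog, hshift, mul_assoc]
  nlinarith [mul_le_mul_of_nonneg_left key (exp_pos (p * x)).le]

lemma le_inv_mul_exp_mul {ε : ℝ} (hε : 0 < ε) (x : ℝ) : x ≤ ε⁻¹ * exp (ε * x) := by
  rw [le_inv_mul_iff₀ hε]
  linarith [add_one_le_exp (ε * x)]

lemma exists_Jkernel_le_add {p q₁ q₂ : ℝ} (hp : 0 ≤ p) (hq₁ : p - 1 < q₁) (hq₂ : q₂ < p)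
    (hq₂₁ : q₂ ≤ 1) :
    ∃ K, ∀ x, Jkernel p x ≤ exp (p * x) * x + K * (exp (q₁ * x) + exp (q₂ * x)) := by
  obtain ⟨ε₁, hε₁, rfl⟩ : ∃ ε₁, 0 < ε₁ ∧ q₁ = p - 1 + ε₁ := ⟨q₁ - (p - 1), by linarith, by ring⟩
  obtain ⟨ε₂, hε₂, rfl⟩ : ∃ ε₂, 0 < ε₂ ∧ q₂ = p - ε₂ := ⟨p - q₂, by linarith, by ring⟩
  set K₁ := (1 + p * exp p) * (1 + ε₁⁻¹)
  set K₂ := 2 ^ p + ε₂⁻¹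
  have hK₁ : 0 ≤ K₁ := by positivity
  have hK₂ : 0 ≤ K₂ := by positivity
  refine ⟨K₁ + K₂, fun x => ?_⟩
  suffices Jkernel p x ≤ exp (p * x) * x + K₁ * exp ((p - 1 + ε₁) * x) + K₂ * exp ((p - ε₂) * x) by
    nlinarith [mul_nonneg hK₁ (exp_pos ((p - ε₂) * x)).le,
      mul_nonneg hK₂ (exp_pos ((p - 1 + ε₁) * x)).le]
  rcases le_total 0 x with hx | hx
  · have hpoly : 1 + x ≤ (1 + ε₁⁻¹) * exp (ε₁ * x) := by
      nlinarith [le_inv_mul_exp_mul hε₁ x, one_le_exp (mul_nonneg hε₁.le hx)]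
    have hE₁ : (1 + x) * exp ((p - 1) * x) ≤ (1 + ε₁⁻¹) * exp ((p - 1 + ε₁) * x) :=
      calc (1 + x) * exp ((p - 1) * x) ≤ (1 + ε₁⁻¹) * exp (ε₁ * x) * exp ((p - 1) * x) :=
            mul_le_mul_of_nonneg_right hpoly (exp_pos _).le
        _ = (1 + ε₁⁻¹) * exp ((p - 1 + ε₁) * x) := by rw [mul_assoc, ← exp_add]; ring_nf
    nlinarith [Jkernel_le_of_nonneg hp hx, mul_le_mul_of_nonneg_left hE₁
      (by positivity : 0 ≤ 1 + p * exp p), mul_nonneg hK₂ (exp_pos ((p - ε₂) * x)).le]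
  · have hexp : exp x ≤ exp ((p - ε₂) * x) := exp_le_exp.2 (by nlinarith)
    have hE₂ : -x * exp (p * x) ≤ ε₂⁻¹ * exp ((p - ε₂) * x) :=
      calc -x * exp (p * x) ≤ ε₂⁻¹ * exp (ε₂ * -x) * exp (p * x) :=
            mul_le_mul_of_nonneg_right (le_inv_mul_exp_mul hε₂ (-x)) (exp_pos _).le
        _ = ε₂⁻¹ * exp ((p - ε₂) * x) := by rw [mul_assoc, ← exp_add]; ring_nf
    nlinarith [Jkernel_le_of_nonpos hp hx, mul_le_mul_of_nonneg_left hexp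
      (by positivity : (0 : ℝ) ≤ 2 ^ p), mul_nonneg hK₁ (exp_pos ((p - 1 + ε₁) * x)).le]

@[fun_prop]
lemma continuous_Jkernel (p : ℝ) : Continuous (Jkernel p) := by
  have hpos (x : ℝ) : 1 + exp x ≠ 0 := by positivity
  exact ((continuous_const.add continuous_exp).rpow_const fun x => Or.inl (hpos x)).mul
    ((continuous_const.add continuous_exp).log hpos)

lemma Jint_eq_integral_Jkernel (p a b : ℝ) :
    Jint p a b = ∫ v, gaussPDF v * Jkernel p (a + b * v) := by
  simp only [Jint, Jkernel, mul_assoc]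

lemma gaussPDF_mul_exp_le_gaussPDF_mul_Jkernel {p : ℝ} (hp : 0 ≤ p) (a b v : ℝ) :
    gaussPDF v * exp (p * (a + b * v)) * (a + b * v) ≤ gaussPDF v * Jkernel p (a + b * v) := by
  rw [mul_assoc]
  exact mul_le_mul_of_nonneg_left (exp_mul_le_Jkernel hp _) (gaussPDF_nonneg v)

section JintBounds

variable {p K q₁ q₂ : ℝ}
  (hK : ∀ x, Jkernel p x ≤ exp (p * x) * x + K * (exp (q₁ * x) + exp (q₂ * x)))
include hK

lemma gaussPDF_mul_Jkernel_le (a b v : ℝ) :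
    gaussPDF v * Jkernel p (a + b * v) ≤ gaussPDF v * exp (p * (a + b * v)) * (a + b * v)
      + K * (gaussPDF v * exp (q₁ * (a + b * v)) + gaussPDF v * exp (q₂ * (a + b * v))) := by
  have := mul_le_mul_of_nonneg_left (hK (a + b * v)) (gaussPDF_nonneg v)
  linarith

lemma integrable_gaussPDF_mul_Jkernel (hp : 0 ≤ p) (a b : ℝ) :
    Integrable fun v => gaussPDF v * Jkernel p (a + b * v) :=
  integrable_of_le_of_le (by fun_prop)
    (ae_of_all _ (gaussPDF_mul_exp_le_gaussPDF_mul_Jkernel hp a b))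
    (ae_of_all _ (gaussPDF_mul_Jkernel_le hK a b))
    (integrable_gaussPDF_mul_exp_affine_mul_affine p a b)
    ((integrable_gaussPDF_mul_exp_affine_mul_affine p a b).add
      (((integrable_gaussPDF_mul_exp_affine q₁ a b).add
        (integrable_gaussPDF_mul_exp_affine q₂ a b)).const_mul K))

lemma mul_exp_fExp_le_Jint (hp : 0 ≤ p) (a b : ℝ) :
    (a + p * b ^ 2) * exp (fExp a b p) ≤ Jint p a b := by
  rw [← integral_gaussPDF_mul_exp_affine_mul_affine, Jint_eq_integral_Jkernel]
  refine integral_mono (integrable_gaussPDF_mul_exp_affine_mul_affine p a b)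
    (integrable_gaussPDF_mul_Jkernel hK hp a b) (gaussPDF_mul_exp_le_gaussPDF_mul_Jkernel hp a b)

lemma Jint_le_add (hp : 0 ≤ p) (a b : ℝ) :
    Jint p a b ≤ (a + p * b ^ 2) * exp (fExp a b p)
      + K * (exp (fExp a b q₁) + exp (fExp a b q₂)) := by
  have hM := integrable_gaussPDF_mul_exp_affine_mul_affine p a b
  have hW₁ := integrable_gaussPDF_mul_exp_affine q₁ a b
  have hW₂ := integrable_gaussPDF_mul_exp_affine q₂ a b
  have hW : Integrable fun v =>
      gaussPDF v * exp (q₁ * (a + b * v)) + gaussPDF v * exp (q₂ * (a + b * v)) := hW₁.add hW₂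
  rw [Jint_eq_integral_Jkernel]
  refine (integral_mono (integrable_gaussPDF_mul_Jkernel hK hp a b) (hM.add (hW.const_mul K))
    (gaussPDF_mul_Jkernel_le hK a b)).trans_eq ?_
  simp only [Pi.add_apply]
  rw [integral_add hM (hW.const_mul K), integral_const_mul, integral_add hW₁ hW₂,
    integral_gaussPDF_mul_exp_affine_mul_affine, integral_gaussPDF_mul_exp_affine,
    integral_gaussPDF_mul_exp_affine]

end JintBounds

lemma fExp_sub_fExp (A B p q : ℝ) :
    fExp A B p - fExp A B q = (p - q) * (A + (p + q) * B ^ 2 / 2) := by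
  simp only [fExp]; ring

lemma tendsto_fExp_div_sq {A B : ℕ → ℝ} {A₂ B₁ : ℝ}
    (hA : Tendsto (fun N : ℕ => A N / (N : ℝ) ^ 2) atTop (nhds A₂))
    (hB : Tendsto (fun N : ℕ => B N / (N : ℝ)) atTop (nhds B₁)) (k : ℝ) :
    Tendsto (fun N : ℕ => fExp (A N) (B N) k / (N : ℝ) ^ 2) atTop (nhds (fExp A₂ B₁ k)) := by
  rw [show fExp A₂ B₁ k = k * A₂ + k ^ 2 / 2 * B₁ ^ 2 by simp only [fExp]; ring]
  refine ((hA.const_mul k).add ((hB.pow 2).const_mul (k ^ 2 / 2))).congr fun N => ?_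
  simp only [fExp]; ring

lemma tendsto_atTop_of_tendsto_div_sq {u : ℕ → ℝ} {L : ℝ} (hL : 0 < L)
    (hu : Tendsto (fun N : ℕ => u N / (N : ℝ) ^ 2) atTop (nhds L)) : Tendsto u atTop atTop := by
  refine (hu.pos_mul_atTop hL ((tendsto_pow_atTop two_ne_zero).comp
    tendsto_natCast_atTop_atTop)).congr' ?_
  filter_upwards [eventually_ne_atTop 0] with N hN
  exact div_mul_cancel₀ _ (by positivity)

lemma tendsto_atBot_of_tendsto_div_sq {u : ℕ → ℝ} {L : ℝ} (hL : L < 0)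
    (hu : Tendsto (fun N : ℕ => u N / (N : ℝ) ^ 2) atTop (nhds L)) : Tendsto u atTop atBot := by
  have := tendsto_atTop_of_tendsto_div_sq (u := fun N => -u N) (neg_pos.2 hL)
    (by simpa only [neg_div] using hu.neg)
  simpa only [Function.comp_def, neg_neg] using tendsto_neg_atTop_atBot.comp this

lemma tendsto_exp_div_mul_exp {ι : Type*} {l : Filter ι} {x y d : ι → ℝ}
    (hd : Tendsto d l atTop) (hxy : Tendsto (fun i => x i - y i) l atBot) :
    Tendsto (fun i => exp (x i) / (d i * exp (y i))) l (nhds 0) := by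
  have := (tendsto_exp_atBot.comp hxy).mul (tendsto_inv_atTop_zero.comp hd)
  rw [zero_mul] at this
  refine this.congr fun i => ?_
  simp only [Function.comp, exp_sub]
  field_simp

lemma tendsto_div_of_le_of_le_add {ι : Type*} {l : Filter ι} {J M R : ι → ℝ}
    (hM : ∀ᶠ i in l, 0 < M i) (hlow : ∀ i, M i ≤ J i) (hup : ∀ i, J i ≤ M i + R i)
    (hR : Tendsto (fun i => R i / M i) l (nhds 0)) :
    Tendsto (fun i => J i / M i) l (nhds 1) := by
  refine tendsto_of_tendsto_of_tendsto_of_le_of_le' tendsto_const_nhds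
    (by simpa using hR.const_add 1) ?_ ?_
  · filter_upwards [hM] with i hi
    rw [le_div_iff₀ hi, one_mul]
    exact hlow i
  · filter_upwards [hM] with i hi
    rw [one_add_div hi.ne', div_le_div_iff_of_pos_right hi]
    exact hup i

/-- First case of Proposition S2: for `p ≥ 0` and `-A₂/B₁² < min(p, 1)`,
`J_p(A_N, B_N) ≈ (A_N + p B_N²) e^{f_N(p)}` at leading order. -/
theorem Jint_asymptotics_first (p A₂ B₁ : ℝ) (hp : 0 ≤ p) (A B : ℕ → ℝ)
    (hA : Tendsto (fun N : ℕ => A N / (N : ℝ) ^ 2) atTop (nhds A₂))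
    (hB : Tendsto (fun N : ℕ => B N / (N : ℝ)) atTop (nhds B₁))
    (hB₁ : 0 < B₁) (h1 : -A₂ / B₁ ^ 2 < min p 1) :
    Tendsto (fun N : ℕ => Jint p (A N) (B N)
        / ((A N + p * (B N) ^ 2) * Real.exp (fExp (A N) (B N) p))) atTop (nhds 1) := by
  have hB₁sq : 0 < B₁ ^ 2 := by positivity
  obtain ⟨hq₂p, hq₂₁⟩ := lt_min_iff.1 h1
  set q₂ := -A₂ / B₁ ^ 2
  have hA₂ : A₂ = -q₂ * B₁ ^ 2 := by
    simp only [q₂, neg_div, neg_neg, div_mul_cancel₀ _ hB₁sq.ne']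
  set q₁ := max (p - 1 / 2) q₂
  have hq₁p : q₁ < p := max_lt (by linarith) hq₂p
  obtain ⟨K, hK⟩ :=
    exists_Jkernel_le_add hp (lt_max_of_lt_left (by linarith : p - 1 < p - 1 / 2)) hq₂p hq₂₁.le
  have hD : Tendsto (fun N => A N + p * B N ^ 2) atTop atTop := by
    refine tendsto_atTop_of_tendsto_div_sq (L := A₂ + p * B₁ ^ 2)
      (by rw [hA₂]; nlinarith [mul_pos (sub_pos.2 hq₂p) hB₁sq]) ?_
    exact (hA.add ((hB.pow 2).const_mul p)).congr fun N => by ring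
  have hdecay (q : ℝ) (hqp : q < p) (hq : q₂ ≤ q) :
      Tendsto (fun N => fExp (A N) (B N) q - fExp (A N) (B N) p) atTop atBot := by
    refine tendsto_atBot_of_tendsto_div_sq (L := fExp A₂ B₁ q - fExp A₂ B₁ p) ?_ ?_
    · rw [← neg_sub, fExp_sub_fExp, hA₂, neg_neg_iff_pos]
      nlinarith [mul_pos (sub_pos.2 hqp) (mul_pos (sub_pos.2 hq₂p) hB₁sq)]
    · simpa only [sub_div] using (tendsto_fExp_div_sq hA hB q).sub (tendsto_fExp_div_sq hA hB p)
  refine tendsto_div_of_le_of_le_add (R := fun N => K * (exp (fExp (A N) (B N) q₁)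
      + exp (fExp (A N) (B N) q₂))) ((hD.eventually_gt_atTop 0).mono fun N hN => ?_)
    (fun N => mul_exp_fExp_le_Jint hK hp _ _) (fun N => Jint_le_add hK hp _ _) ?_
  · exact mul_pos hN (exp_pos _)
  · have := ((tendsto_exp_div_mul_exp hD (hdecay q₁ hq₁p (le_max_right _ _))).add
      (tendsto_exp_div_mul_exp hD (hdecay q₂ hq₂p le_rfl))).const_mul K
    simpa only [add_zero, mul_zero, mul_add, add_div, mul_div_assoc] using this
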